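/- Let G be a finite group satisfying o(xy) ≤ max{o(x), o(y)} for all x, y ∈ G, such that every nontrivial element of G has prime order, and suppose G is not a p-group. If x ∈ G has order p (the prime with F(G) = O_p(G)) and y ∈ G has order q ≠ p, then o(xy) = q. -/

import Mathlib

/-!
Write `N = F(G) = O_p(G)`. An element of prime order `q ≠ p` cannot lie in the `p`-group `N`, so
`y` has order `q` in `G ⧸ N`. Since `x ∈ N`, the images of `x * y` and `y` there coincide, hence
`q ∣ o(x * y)`; as `x * y ≠ 1` has prime order, `o(x * y) = q`.
-/

/-- The Fitting subgroup: the largest normal nilpotent subgroup of `G`. -/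
def fittingSubgroup (G : Type*) [Group G] : Subgroup G :=
  sSup {H : Subgroup G | H.Normal ∧ Group.IsNilpotent H}

/-- The `p`-core: the largest normal `p`-subgroup of `G`. -/
def pCore (p : ℕ) (G : Type*) [Group G] : Subgroup G :=
  sSup {H : Subgroup G | H.Normal ∧ IsPGroup p H}

section

variable {G : Type*} [Group G]

instance pCore_normal (p : ℕ) : (pCore p G).Normal :=
  Subgroup.sSup_normal _ fun _ hH => hH.1

theorem isPGroup_pCore (p : ℕ) : IsPGroup p (pCore p G) :=
  Sylow.sSup_of_normal _ (fun _ hH => hH.2) fun _ hH => hH.1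

theorem IsPGroup.orderOf_eq_of_mem {p : ℕ} {N : Subgroup G} (hN : IsPGroup p N) (hp : p.Prime)
    {y : G} (hy : (orderOf y).Prime) (hyN : y ∈ N) : orderOf y = p := by
  obtain ⟨k, hk⟩ := hN ⟨y, hyN⟩
  have hdvd : orderOf y ∣ p ^ k := by
    rw [← Subgroup.orderOf_mk y hyN]
    exact orderOf_dvd_of_pow_eq_one hk
  exact (Nat.prime_dvd_prime_iff_eq hy hp).mp (hy.dvd_of_dvd_pow hdvd)

theorem orderOf_dvd_orderOf_mul_of_mem_of_notMem {N : Subgroup G} [N.Normal] {x y : G}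
    (hxN : x ∈ N) (hyN : y ∉ N) (hy : (orderOf y).Prime) : orderOf y ∣ orderOf (x * y) := by
  have hmk_y : orderOf (y : G ⧸ N) = orderOf y := by
    have hne : (y : G ⧸ N) ≠ 1 := fun h => hyN ((QuotientGroup.eq_one_iff y).mp h)
    rcases (Nat.dvd_prime hy).mp (orderOf_map_dvd (QuotientGroup.mk' N) y) with h1 | h
    · exact absurd (orderOf_eq_one_iff.mp h1) hne
    · exact h
  have hmk_xy : ((x * y : G) : G ⧸ N) = y := by
    rw [QuotientGroup.mk_mul, (QuotientGroup.eq_one_iff x).mpr hxN, one_mul]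
  rw [← hmk_y, ← hmk_xy]
  exact orderOf_map_dvd (QuotientGroup.mk' N) (x * y)

end

theorem stmt_18_general {G : Type*} [Group G]
    (hprime : ∀ g : G, g ≠ 1 → (orderOf g).Prime)
    {p q : ℕ} (hp : p.Prime) (hq : q.Prime) (hpq : q ≠ p)
    (hFit : fittingSubgroup G = pCore p G)
    {x y : G} (hxF : x ∈ fittingSubgroup G)
    (hy : orderOf y = q) :
    orderOf (x * y) = q := by
  rw [hFit] at hxF
  have hyq : (orderOf y).Prime := hy ▸ hq
  have hyN : y ∉ pCore p G := fun hyN =>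
    hpq (hy ▸ (isPGroup_pCore p).orderOf_eq_of_mem hp hyq hyN)
  have hdvd : q ∣ orderOf (x * y) := hy ▸ orderOf_dvd_orderOf_mul_of_mem_of_notMem hxF hyN hyq
  have hxy : x * y ≠ 1 := by
    rintro hxy
    rw [hxy, orderOf_one, Nat.dvd_one] at hdvd
    exact hq.ne_one hdvd
  exact ((Nat.prime_dvd_prime_iff_eq hq (hprime _ hxy)).mp hdvd).symm

theorem stmt_18 {G : Type*} [Group G] [Finite G]
    (h : ∀ x y : G, orderOf (x * y) ≤ max (orderOf x) (orderOf y))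
    (hprime : ∀ g : G, g ≠ 1 → (orderOf g).Prime)
    (hnp : ¬ ∃ r : ℕ, r.Prime ∧ IsPGroup r G)
    {p q : ℕ} (hp : p.Prime) (hq : q.Prime) (hpq : q ≠ p)
    (hFit : fittingSubgroup G = pCore p G)
    {x y : G} (hx : orderOf x = p) (hxF : x ∈ fittingSubgroup G)
    (hy : orderOf y = q) :
    orderOf (x * y) = q :=
  stmt_18_general hprime hp hq hpq hFit hxF hy
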